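/- Let p ∈ (0,1), τ > 0, and let (f̃_m)_{m∈ℤ} be complex numbers with Σ_{m∈ℤ} |f̃_m|^2 < ∞. Define f(θ) = Σ_{m∈ℤ} f̃_m ψ_m(θ) (this series converges absolutely) and, for each n ≥ 1 and k, l ∈ {0,…,N−1}, define (Ã_n)_{kl} = Σ_{m∈ℤ} f̃_m (Ã_{m,n})_{kl} (for each n only finitely many terms are nonzero). Then lim_{n→∞} max_{0 ≤ k,l ≤ N−1} |(Ã_n)_{kl} − f(θ_l) δ_{kl}| = 0; that is, the matrix elements of Ã_n converge, uniformly in k and l, to those of the diagonal matrix with entries f(θ_l). -/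

import Mathlib

/-!
Since `∑_{j ∈ J_n} e^{2πi(k-l)o(j)/N} = N δ_{kl}`, the `(k,l)` entry of
`Ã_{m,n} - ψ_m(θ_l) δ` is `N⁻¹ e^{2πikm/N} ∑_j e^{2πi(k-l)o(j)/N} (c^{(n)}_{mj} - e^{-τ|m|^p/2})`,
so it is bounded, uniformly in `k, l`, by the mean deviation
`D_n(m) = N⁻¹ ∑_{j ∈ J_n} |c^{(n)}_{mj} - e^{-τ|m|^p/2}|`.

For fixed `m`, `c_{mj} → e^{-τ|m|^p/2}` as `|j| → ∞` (because `|m+j|^p - |j|^p → 0` for `p < 1`),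
and truncation affects only `O(|m|)` of the `N` indices, so `D_n(m) → 0`. Concavity of `x ↦ x^p`
gives `|m|^p + |j|^p - |m+j|^p ≥ κ min(|m|,|j|)^p` with `κ = 1 - 2^{p-1} > 0`, which dominates
`D_n(m)` by the square-summable sequence `e^{-τ|m|^p/2} + e^{-κτ|m|^p/2} + C / max(|m|, 1)`.
As `f̃ ∈ ℓ²`, dominated convergence yields `∑_m |f̃_m| D_n(m) → 0`.
-/

noncomputable section

namespace QECD

/-- The index set `J_n = {−N/2,…,−1,1,…,N/2}` with `N = 2^n`. -/
def Jn (n : ℕ) : Finset ℤ := (Finset.Icc (-(2 ^ (n - 1)) : ℤ) (2 ^ (n - 1))).erase 0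

/-- The order-preserving enumeration `o : J_n → {0,…,N−1}`. -/
def oIdx (n : ℕ) (j : ℤ) : ℤ := if j < 0 then j + 2 ^ (n - 1) else j + 2 ^ (n - 1) - 1

/-- Scaled Fourier basis function `ψ_m(θ) = e^{−τ|m|^p/2} e^{imθ}`. -/
def psi (p τ : ℝ) (m : ℤ) (θ : ℝ) : ℂ :=
  (Real.exp (-(τ * |(m : ℝ)| ^ p) / 2) : ℂ) * Complex.exp (Complex.I * (m : ℂ) * (θ : ℂ))

/-- Structure constants `c_{mj} = e^{−τ(|m|^p + |j|^p − |m+j|^p)/2}`. -/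
def cst (p τ : ℝ) (m j : ℤ) : ℝ :=
  Real.exp (-(τ * (|(m : ℝ)| ^ p + |(j : ℝ)| ^ p - |((m + j : ℤ) : ℝ)| ^ p)) / 2)

/-- Truncated structure constants `c^{(n)}_{mj}`. -/
def cstN (p τ : ℝ) (n : ℕ) (m j : ℤ) : ℝ :=
  if m + j ∈ Jn n then cst p τ m j else 0

/-- Matrix elements `(Ã_{m,n})_{kl}` of the QFT-rotated multiplication operator. -/
def Atilde (p τ : ℝ) (n : ℕ) (m : ℤ) (k l : ℕ) : ℂ :=
  (1 / (2 ^ n : ℂ)) * ∑ j ∈ Jn n,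
    Complex.exp (2 * (Real.pi : ℂ) * Complex.I *
        ((((k : ℤ) - (l : ℤ)) * oIdx n j + (k : ℤ) * m : ℤ) : ℂ) / (2 ^ n : ℂ)) *
      (cstN p τ n m j : ℂ)

open Real Complex Filter Topology Finset

lemma add_rpow_le_rpow_add_two_rpow_mul {p a b : ℝ} (hp : p ≤ 1) (hb : 0 ≤ b) (hba : b ≤ a) :
    (a + b) ^ p ≤ a ^ p + 2 ^ (p - 1) * b ^ p := by
  rcases hb.eq_or_lt with rfl | hb
  · simpa using by positivity
  have ha : 0 < a := hb.trans_le hba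
  have hsplit : (a + b) ^ p = a * (a + b) ^ (p - 1) + b * (a + b) ^ (p - 1) := by
    rw [← add_mul, mul_comm, ← Real.rpow_add_one (by positivity), sub_add_cancel]
  have ha' : a * (a + b) ^ (p - 1) ≤ a ^ p := by
    calc a * (a + b) ^ (p - 1) ≤ a * a ^ (p - 1) :=
          mul_le_mul_of_nonneg_left (Real.rpow_le_rpow_of_nonpos ha (by linarith) (by linarith))
            ha.le
      _ = a ^ p := by rw [mul_comm, Real.rpow_sub_one ha.ne']; field_simp
  have hb' : b * (a + b) ^ (p - 1) ≤ 2 ^ (p - 1) * b ^ p := by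
    calc b * (a + b) ^ (p - 1) ≤ b * (2 * b) ^ (p - 1) :=
          mul_le_mul_of_nonneg_left
            (Real.rpow_le_rpow_of_nonpos (by positivity) (by linarith) (by linarith)) hb.le
      _ = 2 ^ (p - 1) * b ^ p := by
          rw [Real.mul_rpow (by norm_num) hb.le, Real.rpow_sub_one hb.ne']; field_simp
  linarith

lemma abs_rpow_sub_rpow_le {p t a b : ℝ} (hp0 : 0 ≤ p) (hp1 : p ≤ 1) (ht : 0 < t) (ha : t ≤ a)
    (hb : t ≤ b) : |a ^ p - b ^ p| ≤ t ^ (p - 1) * |a - b| := by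
  wlog hba : b ≤ a generalizing a b
  · rw [abs_sub_comm, abs_sub_comm a]
    exact this hb ha (le_of_not_ge hba)
  have hb0 : 0 < b := ht.trans_le hb
  have hquot : (a / b) ^ p ≤ a / b :=
    (Real.rpow_le_rpow_of_exponent_le ((one_le_div hb0).2 hba) hp1).trans_eq (Real.rpow_one _)
  have hconc : a ^ p - b ^ p ≤ b ^ (p - 1) * (a - b) := by
    have : a ^ p = b ^ p * (a / b) ^ p := by
      rw [← Real.mul_rpow hb0.le (div_pos (ht.trans_le ha) hb0).le, mul_div_cancel₀ _ hb0.ne']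
    rw [this, Real.rpow_sub_one hb0.ne']
    have := mul_le_mul_of_nonneg_left hquot (Real.rpow_nonneg hb0.le p)
    field_simp at this ⊢
    linarith
  rw [abs_of_nonneg (sub_nonneg.2 (Real.rpow_le_rpow hb0.le hba hp0)),
    abs_of_nonneg (sub_nonneg.2 hba)]
  exact hconc.trans <| mul_le_mul_of_nonneg_right
    (Real.rpow_le_rpow_of_nonpos ht hb (by linarith)) (sub_nonneg.2 hba)

lemma tendsto_abs_add_rpow_sub_abs_rpow {p : ℝ} (hp0 : 0 ≤ p) (hp1 : p < 1) (c : ℝ) :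
    Tendsto (fun x : ℝ => |x + c| ^ p - |x| ^ p) (cocompact ℝ) (𝓝 0) := by
  have hdist : Tendsto (fun x : ℝ => |x| - |c|) (cocompact ℝ) atTop :=
    tendsto_atTop_add_const_right _ _ tendsto_norm_cocompact_atTop
  have hbound : Tendsto (fun x : ℝ => |c| * (|x| - |c|) ^ (p - 1)) (cocompact ℝ) (𝓝 0) := by
    simpa [neg_sub] using
      ((tendsto_rpow_neg_atTop (y := 1 - p) (by linarith)).comp hdist).const_mul |c|
  refine squeeze_zero_norm' ?_ hbound
  filter_upwards [hdist.eventually_gt_atTop 0] with x hx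
  have hxc : |x| - |c| ≤ |x + c| := by
    have h := abs_add_le (x + c) (-c)
    rw [add_neg_cancel_right, abs_neg] at h
    linarith
  have hdiff : |(|x + c| - |x|)| ≤ |c| := by
    simpa using abs_abs_sub_abs_le_abs_sub (x + c) x
  rw [Real.norm_eq_abs, mul_comm]
  exact (abs_rpow_sub_rpow_le hp0 hp1.le hx hxc (by linarith [abs_nonneg c])).trans
    (mul_le_mul_of_nonneg_left hdiff (Real.rpow_nonneg hx.le _))

lemma tendsto_inv_mul_sum_abs_of_tendsto_cofinite {ι : Type*} {a : ι → ℝ}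
    (ha : Tendsto a cofinite (𝓝 0)) {s : ℕ → Finset ι} {N : ℕ → ℕ}
    (hs : ∀ᶠ n in atTop, #(s n) ≤ N n) (hN : Tendsto N atTop atTop) :
    Tendsto (fun n => (N n : ℝ)⁻¹ * ∑ i ∈ s n, |a i|) atTop (𝓝 0) := by
  refine tendsto_order.2 ⟨fun ε hε => Eventually.of_forall fun n => hε.trans_le (by positivity),
    fun ε hε => ?_⟩
  have hsmall : ∀ᶠ i in cofinite, |a i| < ε / 2 := by
    simpa using ha.abs.eventually (gt_mem_nhds (by simpa using half_pos hε))
  set F := (eventually_cofinite.1 hsmall).toFinset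
  set K := ∑ i ∈ F, |a i|
  have hsum : ∀ n, #(s n) ≤ N n → ∑ i ∈ s n, |a i| ≤ K + N n * (ε / 2) := by
    intro n hn
    rw [← sum_filter_add_sum_filter_not _ (fun i => |a i| < ε / 2), add_comm]
    gcongr
    · exact sum_le_sum_of_subset_of_nonneg (fun i => by simp [F]) fun _ _ _ => abs_nonneg _
    · refine (sum_le_card_nsmul _ _ _ fun i hi => (mem_filter.1 hi).2.le).trans ?_
      rw [nsmul_eq_mul]
      gcongr
      exact_mod_cast (card_filter_le _ _).trans hn
  have hNK := (tendsto_natCast_atTop_atTop.comp hN).eventually_gt_atTop (2 * K / ε)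
  filter_upwards [hs, hNK] with n hn hNn
  have hNpos : (0 : ℝ) < N n := lt_of_le_of_lt (by positivity) hNn
  rw [inv_mul_lt_iff₀ hNpos]
  have := hsum n hn
  rw [Function.comp_apply, div_lt_iff₀ hε] at hNn
  nlinarith

lemma summable_mul_of_summable_sq {ι : Type*} {f g : ι → ℝ} (hf : Summable fun i => f i ^ 2)
    (hg : Summable fun i => g i ^ 2) : Summable fun i => f i * g i :=
  (hf.add hg).of_norm_bounded fun i => by
    rw [norm_mul, Real.norm_eq_abs, Real.norm_eq_abs]
    nlinarith [sq_abs (f i), sq_abs (g i), sq_nonneg (|f i| - |g i|)]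

lemma norm_tsum_sub_tsum_le {ι E : Type*} [NormedAddCommGroup E] [CompleteSpace E] {u v : ι → E}
    {w : ι → ℝ} (hw : Summable w) (hv : Summable v) (huv : ∀ i, ‖u i - v i‖ ≤ w i) :
    ‖∑' i, u i - ∑' i, v i‖ ≤ ∑' i, w i := by
  have hu : Summable u := by simpa using (hw.of_norm_bounded huv).add hv
  rw [← hu.tsum_sub hv]
  exact tsum_of_norm_bounded hw.hasSum huv

lemma sum_range_exp_int_mul_eq_zero {N : ℕ} {c : ℤ} (hc : ¬(N : ℤ) ∣ c) :
    ∑ r ∈ range N, exp (2 * π * I * (c * r) / N) = 0 := by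
  rcases eq_or_ne N 0 with rfl | hN
  · simp
  have hζ := Complex.isPrimitiveRoot_exp N hN
  set η := exp (2 * π * I / N) ^ c
  have hpow : ∀ r : ℕ, exp (2 * π * I * (c * r) / N) = η ^ r := by
    intro r
    rw [← zpow_natCast, ← zpow_mul, ← exp_int_mul]
    push_cast
    ring_nf
  have hη : η ≠ 1 := (hζ.zpow_eq_one_iff_dvd c).not.2 hc
  have hηN : η ^ N = 1 := by
    rw [← zpow_natCast, ← zpow_mul, mul_comm c, zpow_mul, zpow_natCast, hζ.pow_eq_one, one_zpow]
  simp_rw [hpow, geom_sum_eq hη, hηN, sub_self, zero_div]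

lemma mem_Jn {n : ℕ} {j : ℤ} : j ∈ Jn n ↔ j ≠ 0 ∧ -2 ^ (n - 1) ≤ j ∧ j ≤ 2 ^ (n - 1) := by
  simp [Jn]

lemma two_pow_eq_two_mul {n : ℕ} (hn : n ≠ 0) : ((2 ^ n : ℕ) : ℤ) = 2 * 2 ^ (n - 1) := by
  push_cast; exact (mul_pow_sub_one hn 2).symm

lemma card_Jn {n : ℕ} (hn : n ≠ 0) : #(Jn n) = 2 ^ n := by
  rw [Jn, card_erase_of_mem (by simp), Int.card_Icc]
  have := two_pow_eq_two_mul hn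
  have : (0 : ℤ) < 2 ^ (n - 1) := by positivity
  omega

lemma sum_Jn_oIdx {M : Type*} [AddCommMonoid M] {n : ℕ} (hn : n ≠ 0) (F : ℤ → M) :
    ∑ j ∈ Jn n, F (oIdx n j) = ∑ r ∈ range (2 ^ n), F r := by
  have hN := two_pow_eq_two_mul hn
  have hH : (0 : ℤ) < 2 ^ (n - 1) := by positivity
  refine sum_nbij' (fun j => (oIdx n j).toNat)
    (fun r => if (r : ℤ) < 2 ^ (n - 1) then r - 2 ^ (n - 1) else r - 2 ^ (n - 1) + 1)
    ?_ ?_ ?_ ?_ fun j hj => congrArg F ?_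
  all_goals
    try intro j hj
    simp only [mem_range, mem_Jn, oIdx] at hj ⊢
    split_ifs <;> omega

lemma card_filter_add_notMem_Jn_le (n : ℕ) (m : ℤ) :
    #{j ∈ Jn n | m + j ∉ Jn n} ≤ 2 * m.natAbs + 1 := by
  set H : ℤ := 2 ^ (n - 1)
  have hsub : {j ∈ Jn n | m + j ∉ Jn n} ⊆
      insert (-m) (Ioc (H - m.natAbs) H ∪ Ico (-H) (-H + m.natAbs)) := by
    intro j
    simp only [mem_filter, mem_Jn, mem_insert, mem_union, mem_Ioc, mem_Ico]
    omega
  calc #{j ∈ Jn n | m + j ∉ Jn n}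
      ≤ #(Ioc (H - m.natAbs) H ∪ Ico (-H) (-H + m.natAbs)) + 1 :=
        (card_le_card hsub).trans (card_insert_le _ _)
    _ ≤ #(Ioc (H - m.natAbs) H) + #(Ico (-H) (-H + m.natAbs)) + 1 := by
        gcongr
        exact card_union_le _ _
    _ = 2 * m.natAbs + 1 := by
        rw [Int.card_Ioc, Int.card_Ico]
        omega

def unitExp (n : ℕ) (x : ℤ) : ℂ := exp (2 * π * I * x / 2 ^ n)

lemma unitExp_add (n : ℕ) (x y : ℤ) : unitExp n (x + y) = unitExp n x * unitExp n y := by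
  simp only [unitExp, ← Complex.exp_add]
  push_cast
  ring_nf

lemma norm_unitExp (n : ℕ) (x : ℤ) : ‖unitExp n x‖ = 1 := by
  rw [unitExp, show 2 * π * I * x / 2 ^ n = ((2 * π * x / 2 ^ n : ℝ) : ℂ) * I by push_cast; ring,
    norm_exp_ofReal_mul_I]

lemma sum_Jn_unitExp_oIdx {n k l : ℕ} (hn : n ≠ 0) (hk : k < 2 ^ n) (hl : l < 2 ^ n) :
    ∑ j ∈ Jn n, unitExp n ((k - l) * oIdx n j) = if k = l then 2 ^ n else 0 := by
  rw [sum_Jn_oIdx hn (fun t => unitExp n ((k - l) * t))]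
  split_ifs with hkl
  · simp [hkl, unitExp]
  · have hk' : (k : ℤ) < 2 ^ n := by exact_mod_cast hk
    have hl' : (l : ℤ) < 2 ^ n := by exact_mod_cast hl
    have hdvd : ¬((2 ^ n : ℕ) : ℤ) ∣ (k - l) := fun h => hkl <| by
      have := Int.eq_zero_of_abs_lt_dvd h (by rw [abs_lt]; push_cast; omega)
      omega
    simpa [unitExp] using sum_range_exp_int_mul_eq_zero hdvd

def weight (p τ : ℝ) (m : ℤ) : ℝ := Real.exp (-(τ * |(m : ℝ)| ^ p) / 2)

lemma weight_pos (p τ : ℝ) (m : ℤ) : 0 < weight p τ m := Real.exp_pos _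

def meanDeviation (p τ : ℝ) (n : ℕ) (m : ℤ) : ℝ :=
  (2 ^ n)⁻¹ * ∑ j ∈ Jn n, |cstN p τ n m j - weight p τ m|

section Fourier

variable {p τ : ℝ} {n k l : ℕ}

lemma Atilde_eq (m : ℤ) : Atilde p τ n m k l =
    (2 ^ n)⁻¹ * ∑ j ∈ Jn n, unitExp n ((k - l) * oIdx n j + k * m) * cstN p τ n m j := by
  rw [Atilde, one_div]
  rfl

lemma psi_eq_weight_mul_unitExp (m : ℤ) (θ : ℕ) :
    psi p τ m (2 * π * θ / 2 ^ n) = weight p τ m * unitExp n (θ * m) := by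
  rw [psi, weight, unitExp]
  push_cast
  ring_nf

lemma norm_psi (m : ℤ) (θ : ℝ) : ‖psi p τ m θ‖ = weight p τ m := by
  rw [psi, norm_mul, show I * m * θ = ((m * θ : ℝ) : ℂ) * I by push_cast; ring,
    norm_exp_ofReal_mul_I, mul_one, Complex.norm_real, Real.norm_of_nonneg (Real.exp_pos _).le,
    weight]

lemma Atilde_sub_psi_mul_ite (hn : n ≠ 0) (hk : k < 2 ^ n) (hl : l < 2 ^ n) (m : ℤ) :
    Atilde p τ n m k l - psi p τ m (2 * π * l / 2 ^ n) * (if k = l then 1 else 0)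
      = (2 ^ n)⁻¹ * unitExp n (k * m) *
          ∑ j ∈ Jn n, unitExp n ((k - l) * oIdx n j) * (cstN p τ n m j - weight p τ m : ℝ) := by
  have hdiag : psi p τ m (2 * π * l / 2 ^ n) * (if k = l then 1 else 0) = (2 ^ n)⁻¹ *
      unitExp n (k * m) * ∑ j ∈ Jn n, unitExp n ((k - l) * oIdx n j) * weight p τ m := by
    rw [← sum_mul, sum_Jn_unitExp_oIdx hn hk hl, psi_eq_weight_mul_unitExp]
    split_ifs with hkl
    · subst hkl
      field_simp
    · simp
  rw [hdiag, Atilde_eq, mul_assoc, mul_assoc, ← mul_sub]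
  congr 1
  rw [mul_sum, mul_sum, ← sum_sub_distrib]
  refine sum_congr rfl fun j _ => ?_
  rw [unitExp_add]
  push_cast
  ring

lemma norm_Atilde_sub_le (hn : n ≠ 0) (hk : k < 2 ^ n) (hl : l < 2 ^ n) (m : ℤ) :
    ‖Atilde p τ n m k l - psi p τ m (2 * π * l / 2 ^ n) * (if k = l then 1 else 0)‖
      ≤ meanDeviation p τ n m := by
  rw [Atilde_sub_psi_mul_ite hn hk hl, norm_mul, norm_mul, norm_unitExp, mul_one, meanDeviation,
    norm_inv, norm_pow, RCLike.norm_ofNat]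
  gcongr
  refine (norm_sum_le _ _).trans_eq (sum_congr rfl fun j _ => ?_)
  rw [norm_mul, norm_unitExp, one_mul, Complex.norm_real, Real.norm_eq_abs]

end Fourier

section StructureConstants

variable {p τ : ℝ}

lemma cst_comm (m j : ℤ) : cst p τ m j = cst p τ j m := by
  rw [cst, cst, add_comm m j, add_comm (|(m : ℝ)| ^ p)]

lemma cst_le_weight_add_weight (hp0 : 0 ≤ p) (hp1 : p ≤ 1) (hτ : 0 ≤ τ) (m j : ℤ) :
    cst p τ m j ≤ weight p ((1 - 2 ^ (p - 1)) * τ) m + weight p ((1 - 2 ^ (p - 1)) * τ) j := by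
  wlog hjm : |(j : ℝ)| ≤ |(m : ℝ)| generalizing m j
  · rw [cst_comm, add_comm]
    exact this j m (le_of_not_ge hjm)
  have hconc : |((m + j : ℤ) : ℝ)| ^ p ≤ |(m : ℝ)| ^ p + 2 ^ (p - 1) * |(j : ℝ)| ^ p :=
    (Real.rpow_le_rpow (abs_nonneg _) (by push_cast; exact abs_add_le _ _) hp0).trans
      (add_rpow_le_rpow_add_two_rpow_mul hp1 (abs_nonneg _) hjm)
  have hj : cst p τ m j ≤ weight p ((1 - 2 ^ (p - 1)) * τ) j := by
    rw [cst, weight, Real.exp_le_exp]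
    nlinarith [mul_le_mul_of_nonneg_left hconc hτ]
  exact hj.trans (le_add_of_nonneg_left (Real.exp_pos _).le)

lemma tendsto_cst_cofinite (hp0 : 0 ≤ p) (hp1 : p < 1) (m : ℤ) :
    Tendsto (cst p τ m) cofinite (𝓝 (weight p τ m)) := by
  have hshift := (tendsto_abs_add_rpow_sub_abs_rpow hp0 hp1 m).comp Int.tendsto_coe_cofinite
  have := (Real.continuous_exp.tendsto _).comp
    ((((hshift.const_sub (|(m : ℝ)| ^ p)).const_mul τ).neg).div_const 2)
  convert this using 1
  · ext j
    simp only [cst, Function.comp_apply]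
    push_cast
    ring_nf
  · simp [weight]

end StructureConstants

section MeanDeviation

variable {p τ : ℝ}

lemma meanDeviation_nonneg (n : ℕ) (m : ℤ) : 0 ≤ meanDeviation p τ n m := by
  unfold meanDeviation
  positivity

lemma meanDeviation_le_untruncated_add (n : ℕ) (m : ℤ) :
    meanDeviation p τ n m ≤ ((2 ^ n : ℕ) : ℝ)⁻¹ * ∑ j ∈ Jn n, |cst p τ m j - weight p τ m| +
      ((2 ^ n : ℕ) : ℝ)⁻¹ * ((2 * m.natAbs + 1) * weight p τ m) := by
  have hterm : ∀ j, |cstN p τ n m j - weight p τ m| ≤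
      |cst p τ m j - weight p τ m| + if m + j ∈ Jn n then 0 else weight p τ m := by
    intro j
    unfold cstN
    split_ifs
    · simp
    · rw [zero_sub, abs_neg, abs_of_pos (weight_pos p τ m)]
      exact le_add_of_nonneg_left (abs_nonneg _)
  rw [meanDeviation, ← mul_add, Nat.cast_pow, Nat.cast_ofNat]
  gcongr
  calc ∑ j ∈ Jn n, |cstN p τ n m j - weight p τ m|
      ≤ ∑ j ∈ Jn n, (|cst p τ m j - weight p τ m| + if m + j ∈ Jn n then 0 else weight p τ m) :=
        sum_le_sum fun j _ => hterm j
    _ = ∑ j ∈ Jn n, |cst p τ m j - weight p τ m| +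
          #{j ∈ Jn n | m + j ∉ Jn n} * weight p τ m := by
        rw [sum_add_distrib, sum_ite, sum_const_zero, zero_add, sum_const, nsmul_eq_mul]
    _ ≤ _ := by
        gcongr
        · exact (weight_pos p τ m).le
        · exact_mod_cast card_filter_add_notMem_Jn_le n m

lemma tendsto_meanDeviation (hp0 : 0 ≤ p) (hp1 : p < 1) (m : ℤ) :
    Tendsto (fun n => meanDeviation p τ n m) atTop (𝓝 0) := by
  have hpow : Tendsto (fun n : ℕ => 2 ^ n) atTop atTop :=
    tendsto_pow_atTop_atTop_of_one_lt one_lt_two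
  have hcesaro := tendsto_inv_mul_sum_abs_of_tendsto_cofinite
    (tendsto_sub_nhds_zero_iff.2 (tendsto_cst_cofinite (τ := τ) hp0 hp1 m))
    ((eventually_ne_atTop 0).mono fun n hn => (card_Jn hn).le) hpow
  have htrunc := (tendsto_inv_atTop_zero.comp (tendsto_natCast_atTop_atTop.comp hpow)).mul_const
    ((2 * m.natAbs + 1) * weight p τ m)
  refine squeeze_zero (meanDeviation_nonneg · m) (meanDeviation_le_untruncated_add · m) ?_
  simpa using hcesaro.add htrunc

end MeanDeviation

section Domination

variable {p τ : ℝ}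

lemma one_sub_two_rpow_pos (hp : p < 1) : 0 < 1 - (2 : ℝ) ^ (p - 1) := by
  linarith [Real.rpow_lt_one_of_one_lt_of_neg one_lt_two (by linarith : p - 1 < 0)]

lemma summable_weight (hp : 0 < p) (hτ : 0 < τ) : Summable (weight p τ) := by
  have ht : Tendsto (fun m : ℤ => |(m : ℝ)| ^ p) cofinite atTop :=
    (tendsto_rpow_atTop hp).comp (tendsto_norm_cocompact_atTop.comp Int.tendsto_coe_cofinite)
  have h := ((isLittleO_exp_neg_mul_rpow_atTop (half_pos hτ) (-2 / p)).comp_tendsto ht).isBigO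
  refine summable_of_isBigO (summable_abs_int_rpow one_lt_two)
    (h.congr (fun m => ?_) (fun m => ?_))
  · simp only [Function.comp_apply, weight]
    ring_nf
  · simp only [Function.comp_apply]
    rw [← Real.rpow_mul (abs_nonneg _)]
    field_simp

lemma weight_sq (p τ : ℝ) (m : ℤ) : weight p τ m ^ 2 = weight p (2 * τ) m := by
  rw [weight, weight, ← Real.exp_nat_mul]
  push_cast
  ring_nf

lemma summable_weight_sq (hp : 0 < p) (hτ : 0 < τ) : Summable fun m => weight p τ m ^ 2 := by
  simpa only [weight_sq] using summable_weight hp (mul_pos two_pos hτ)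

lemma cstN_nonneg (n : ℕ) (m j : ℤ) : 0 ≤ cstN p τ n m j := by
  unfold cstN
  split_ifs
  exacts [(Real.exp_pos _).le, le_rfl]

lemma sum_cstN_le (hp : p ∈ Set.Ioo 0 1) (hτ : 0 < τ) {n : ℕ} (hn : n ≠ 0) (m : ℤ) :
    ∑ j ∈ Jn n, cstN p τ n m j ≤ 2 ^ n * (weight p ((1 - 2 ^ (p - 1)) * τ) m +
      (∑' j, weight p ((1 - 2 ^ (p - 1)) * τ) j) / max |(m : ℝ)| 1) := by
  set τ' := (1 - 2 ^ (p - 1)) * τ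
  have hτ' : 0 < τ' := mul_pos (one_sub_two_rpow_pos hp.2) hτ
  set C := ∑' j, weight p τ' j
  have hC : 0 ≤ C := tsum_nonneg fun j => (weight_pos p τ' j).le
  by_cases hm : |(m : ℝ)| ≤ 2 ^ n
  · calc ∑ j ∈ Jn n, cstN p τ n m j ≤ ∑ j ∈ Jn n, (weight p τ' m + weight p τ' j) := by
          refine sum_le_sum fun j _ => ?_
          unfold cstN
          split_ifs
          · exact cst_le_weight_add_weight hp.1.le hp.2.le hτ.le m j
          · exact (add_pos (weight_pos p τ' m) (weight_pos p τ' j)).le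
      _ ≤ 2 ^ n * weight p τ' m + C := by
          rw [sum_add_distrib, sum_const, card_Jn hn, nsmul_eq_mul]
          push_cast
          gcongr
          exact (summable_weight hp.1 hτ').sum_le_tsum _ fun j _ => (weight_pos p τ' j).le
      _ ≤ 2 ^ n * (weight p τ' m + C / max |(m : ℝ)| 1) := by
          rw [mul_add, ← mul_div_assoc]
          gcongr
          rw [le_div_iff₀ (by positivity), mul_comm C]
          gcongr
          exact max_le hm (one_le_pow₀ one_le_two)
  · have hzero : ∀ j ∈ Jn n, cstN p τ n m j = 0 := by
      intro j hj
      rw [cstN, if_neg]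
      intro hmj
      rw [mem_Jn] at hj hmj
      have := two_pow_eq_two_mul hn
      have hm' : |m| ≤ ((2 ^ n : ℕ) : ℤ) := abs_le.2 ⟨by omega, by omega⟩
      exact hm (by exact_mod_cast hm')
    rw [sum_eq_zero hzero]
    exact mul_nonneg (by positivity) (add_nonneg (weight_pos p τ' m).le (by positivity))

-- With `q = weight p ((1 - 2 ^ (p - 1)) * τ)`, `c_{mj} ≤ q_m + q_j`; the `q_j` average to at most
-- `(∑ q) / N`, and the truncated constants vanish unless `|m| ≤ N`.
def majorant (p τ : ℝ) (m : ℤ) : ℝ :=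
  weight p τ m + weight p ((1 - 2 ^ (p - 1)) * τ) m +
    (∑' j, weight p ((1 - 2 ^ (p - 1)) * τ) j) / max |(m : ℝ)| 1

lemma meanDeviation_le_majorant (hp : p ∈ Set.Ioo 0 1) (hτ : 0 < τ) {n : ℕ} (hn : n ≠ 0)
    (m : ℤ) : meanDeviation p τ n m ≤ majorant p τ m := by
  have hterm : ∀ j ∈ Jn n, |cstN p τ n m j - weight p τ m| ≤ cstN p τ n m j + weight p τ m :=
    fun j _ => abs_sub_le_iff.2
      ⟨by linarith [weight_pos p τ m], by linarith [cstN_nonneg (p := p) (τ := τ) n m j]⟩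
  have hpow : (0 : ℝ) < 2 ^ n := by positivity
  calc meanDeviation p τ n m ≤ (2 ^ n)⁻¹ * ∑ j ∈ Jn n, (cstN p τ n m j + weight p τ m) := by
        unfold meanDeviation
        gcongr with j hj
        exact hterm j hj
    _ = (2 ^ n)⁻¹ * ∑ j ∈ Jn n, cstN p τ n m j + weight p τ m := by
        rw [sum_add_distrib, sum_const, card_Jn hn, nsmul_eq_mul]
        push_cast
        field_simp
    _ ≤ majorant p τ m := by
        have h := mul_le_mul_of_nonneg_left (sum_cstN_le hp hτ hn m) (inv_nonneg.2 hpow.le)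
        rw [← mul_assoc, inv_mul_cancel₀ hpow.ne', one_mul] at h
        rw [majorant]
        linarith

lemma summable_inv_max_abs_one_sq : Summable fun m : ℤ => (max |(m : ℝ)| 1)⁻¹ ^ 2 := by
  refine (summable_abs_int_rpow one_lt_two).of_norm_bounded_eventually ?_
  filter_upwards [eventually_cofinite_ne 0] with m hm
  have h1 : (1 : ℝ) ≤ |(m : ℝ)| := by exact_mod_cast Int.one_le_abs hm
  rw [max_eq_left h1, Real.rpow_neg (abs_nonneg _), norm_pow, norm_inv,
    Real.norm_of_nonneg (abs_nonneg _), inv_pow]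
  norm_cast

lemma summable_norm_mul_majorant (hp : p ∈ Set.Ioo 0 1) (hτ : 0 < τ) {f : ℤ → ℂ}
    (hf : Summable fun m => ‖f m‖ ^ 2) : Summable fun m => ‖f m‖ * majorant p τ m := by
  have hweight : ∀ τ', 0 < τ' → Summable fun m => ‖f m‖ * weight p τ' m := fun τ' hτ' =>
    summable_mul_of_summable_sq hf (summable_weight_sq hp.1 hτ')
  have hmax := (summable_mul_of_summable_sq hf summable_inv_max_abs_one_sq).mul_left
    (∑' j, weight p ((1 - 2 ^ (p - 1)) * τ) j)
  simp_rw [majorant, mul_add]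
  refine ((hweight τ hτ).add (hweight _ (mul_pos (one_sub_two_rpow_pos hp.2) hτ))).add
    (hmax.congr fun m => ?_)
  ring

end Domination

/-- Let `p ∈ (0,1)`, `τ > 0`, and let `(f̃_m)` be square-summable complex
coefficients. Then the series `f(θ) = Σ_m f̃_m ψ_m(θ)` converges absolutely, and the matrix
elements `(Ã_n)_{kl} = Σ_m f̃_m (Ã_{m,n})_{kl}` converge, uniformly in `k, l ∈ {0,…,N−1}`,
to those of the diagonal matrix with entries `f(θ_l)`. -/
theorem matrix_elements_uniform_convergence (p τ : ℝ) (hp : p ∈ Set.Ioo (0 : ℝ) 1)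
    (hτ : 0 < τ) (ft : ℤ → ℂ) (hft : Summable fun m : ℤ => ((norm : ℂ → ℝ) (ft m)) ^ 2) :
    (∀ θ : ℝ, Summable fun m : ℤ => (norm : ℂ → ℝ) (ft m * psi p τ m θ)) ∧
    ∀ ε : ℝ, 0 < ε → ∃ n₀ : ℕ, ∀ n : ℕ, n₀ ≤ n → ∀ k l : ℕ, k < 2 ^ n → l < 2 ^ n →
      (norm : ℂ → ℝ) ((∑' m : ℤ, ft m * Atilde p τ n m k l)
          - (∑' m : ℤ, ft m * psi p τ m (2 * Real.pi * l / 2 ^ n))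
              * (if k = l then 1 else 0)) < ε := by
  have hpsi : ∀ θ : ℝ, Summable fun m => ‖ft m * psi p τ m θ‖ := fun θ =>
    (summable_mul_of_summable_sq hft (summable_weight_sq hp.1 hτ)).congr fun m => by
      rw [norm_mul, norm_psi]
  have hmaj := summable_norm_mul_majorant hp hτ hft
  have hbound : ∀ n, n ≠ 0 → ∀ m, ‖‖ft m‖ * meanDeviation p τ n m‖ ≤ ‖ft m‖ * majorant p τ m :=
    fun n hn m => by
      rw [Real.norm_of_nonneg (mul_nonneg (norm_nonneg _) (meanDeviation_nonneg n m))]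
      exact mul_le_mul_of_nonneg_left (meanDeviation_le_majorant hp hτ hn m) (norm_nonneg _)
  have hlim : Tendsto (fun n => ∑' m, ‖ft m‖ * meanDeviation p τ n m) atTop (𝓝 0) := by
    simpa using tendsto_tsum_of_dominated_convergence hmaj
      (fun m => (tendsto_meanDeviation hp.1.le hp.2 m).const_mul ‖ft m‖)
      ((eventually_ne_atTop 0).mono hbound)
  refine ⟨hpsi, fun ε hε => ?_⟩
  obtain ⟨n₀, hn₀⟩ := eventually_atTop.1 ((hlim.eventually_lt_const hε).and (eventually_ne_atTop 0))
  refine ⟨n₀, fun n hn k l hk hl => ?_⟩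
  obtain ⟨hsmall, hn0⟩ := hn₀ n hn
  rw [← tsum_mul_right]
  refine (norm_tsum_sub_tsum_le (hmaj.of_norm_bounded (hbound n hn0))
    ((hpsi _).of_norm.mul_right _) fun m => ?_).trans_lt hsmall
  rw [mul_assoc, ← mul_sub, norm_mul]
  exact mul_le_mul_of_nonneg_left (norm_Atilde_sub_le hn0 hk hl m) (norm_nonneg _)

end QECD
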